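/- Let G denote the theory of global fields and F^∞ the theory of infinite fields, in the language of rings. Then G_∃ = (F^∞)_∃, i.e. an existential-fragment sentence holds in all global fields if and only if it holds in all infinite fields. Moreover G_{p,∃} = (F^∞)_{p,∃} = Th_∃(𝔽_p(t)) for every prime p, and G_{0,∃} = Th_∃(ℚ). -/

import Mathlib

open FirstOrder Set FirstOrder.Ring

universe u v w

namespace PaperStmt

/-- An `𝔏`-fragment: a set of `𝔏`-sentences containing `⊤` and `⊥` and
closed under `∧` and `∨`. -/
def IsFragment {L : FirstOrder.Language.{u, v}} (F : Set L.Sentence) : Prop :=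
  (⊤ : L.Sentence) ∈ F ∧ (⊥ : L.Sentence) ∈ F ∧
    ∀ φ ψ : L.Sentence, φ ∈ F → ψ ∈ F → (φ ⊓ ψ) ∈ F ∧ (φ ⊔ ψ) ∈ F

/-- The smallest fragment containing a given set of sentences. -/
def fragmentClosure {L : FirstOrder.Language.{u, v}} (S : Set L.Sentence) : Set L.Sentence :=
  ⋂₀ {F : Set L.Sentence | IsFragment F ∧ S ⊆ F}

/-- `Sent_{∃ₙ}(𝔏)`: the smallest fragment containing all existential sentences with at
most `n` quantifiers. -/
def sentEn (L : FirstOrder.Language.{u, v}) (n : ℕ) : Set L.Sentence :=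
  fragmentClosure {φ | ∃ m, m ≤ n ∧ ∃ ψ : L.BoundedFormula Empty m, ψ.IsQF ∧ φ = ψ.exs}

/-- `Sent_∃(𝔏)`: the smallest fragment containing all existential sentences. -/
def sentE (L : FirstOrder.Language.{u, v}) : Set L.Sentence :=
  fragmentClosure {φ | ∃ m, ∃ ψ : L.BoundedFormula Empty m, ψ.IsQF ∧ φ = ψ.exs}

/-- A global field: a finite extension of `ℚ`, or a finite extension of `𝔽_p(t)` for
some prime `p`. -/
def IsGlobalField (K : Type w) [Field K] : Prop :=
  (CharZero K ∧ ∃ _ : Algebra ℚ K, FiniteDimensional ℚ K) ∨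
  (∃ p : ℕ, ∃ hp : p.Prime,
    letI : Fact p.Prime := ⟨hp⟩
    ∃ _ : Algebra (RatFunc (ZMod p)) K, FiniteDimensional (RatFunc (ZMod p)) K)

/-! ### Auxiliary lemmas -/

open FirstOrder.Language Cardinal

theorem sentE_induction {L : FirstOrder.Language.{u, v}} {P : L.Sentence → Prop}
    (htop : P ⊤) (hbot : P ⊥)
    (hmin : ∀ φ ψ, P φ → P ψ → P (φ ⊓ ψ)) (hmax : ∀ φ ψ, P φ → P ψ → P (φ ⊔ ψ))
    (hbase : ∀ (m : ℕ) (ψ : L.BoundedFormula Empty m), ψ.IsQF → P ψ.exs)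
    {φ : L.Sentence} (hφ : φ ∈ sentE L) : P φ :=
  Set.mem_sInter.1 hφ {x | P x}
    ⟨⟨htop, hbot, fun φ ψ h1 h2 => ⟨hmin φ ψ h1 h2, hmax φ ψ h1 h2⟩⟩,
      by rintro x ⟨m, ψ, hQF, rfl⟩; exact hbase m ψ hQF⟩

/-- Sentences in the existential fragment go up along embeddings. -/
theorem realize_sentE_of_embedding {L : FirstOrder.Language.{u, v}} {M : Type*} {N : Type*}
    [L.Structure M] [L.Structure N] (f : M ↪[L] N) {φ : L.Sentence}
    (hφ : φ ∈ sentE L) (h : M ⊨ φ) : N ⊨ φ := by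
  revert h
  refine sentE_induction (P := fun χ => Sentence.Realize M χ → Sentence.Realize N χ)
    ?_ ?_ ?_ ?_ ?_ hφ
  · intro _; simp [Sentence.Realize]
  · intro h; simp [Sentence.Realize] at h
  · intro φ ψ h1 h2 h
    simp only [Sentence.Realize, Formula.realize_inf] at h ⊢
    exact ⟨h1 h.1, h2 h.2⟩
  · intro φ ψ h1 h2 h
    simp only [Sentence.Realize, Formula.realize_sup] at h ⊢
    exact h.elim (fun h => Or.inl (h1 h)) (fun h => Or.inr (h2 h))
  · intro m ψ hQF h
    simp only [Sentence.Realize, BoundedFormula.realize_exs] at h ⊢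
    obtain ⟨xs, hxs⟩ := h
    refine ⟨f ∘ xs, ?_⟩
    have := (hQF.realize_embedding f (v := (default : Empty → M)) (xs := xs)).2 hxs
    rwa [Subsingleton.elim ((f : M → N) ∘ (default : Empty → M)) default] at this

/-- Turn an injective ring hom into an embedding in the language of rings. -/
noncomputable def embeddingOfRingHom {R S : Type*} [NonAssocRing R] [NonAssocRing S]
    [CompatibleRing R] [CompatibleRing S] (f : R →+* S) (hf : Function.Injective f) :
    Language.ring.Embedding R S :=
  { toFun := f
    inj' := hf
    map_fun' := fun {n} g x => by cases g <;> simp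
    map_rel' := fun {n} r => by cases r }

/-- Every global field is infinite. -/
theorem infinite_of_isGlobalField {K : Type w} [Field K] (h : IsGlobalField K) : Infinite K := by
  rcases h with ⟨h0, _, _⟩ | ⟨p, hp, halg, _⟩
  · haveI := h0
    exact Infinite.of_injective (Nat.cast : ℕ → K) Nat.cast_injective
  · haveI : Fact p.Prime := ⟨hp⟩
    letI := halg
    haveI : Infinite (RatFunc (ZMod p)) :=
      Infinite.of_injective (algebraMap (Polynomial (ZMod p)) (RatFunc (ZMod p)))
        (IsFractionRing.injective (Polynomial (ZMod p)) (RatFunc (ZMod p)))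
    exact Infinite.of_injective (algebraMap (RatFunc (ZMod p)) K)
      (algebraMap (RatFunc (ZMod p)) K).injective

theorem charZero_ulift_rat : CharZero (ULift.{w} ℚ) :=
  ⟨fun a b h => by have := congrArg ULift.down h; simpa using this⟩

theorem isGlobalField_ulift_rat : IsGlobalField (ULift.{w} ℚ) := by
  refine Or.inl ⟨charZero_ulift_rat, ULift.algebra, ?_⟩
  exact Module.Finite.of_surjective (Algebra.linearMap ℚ (ULift.{w} ℚ))
    (fun x => ⟨x.down, by apply ULift.down_injective; simp [ULift.algebraMap_eq]⟩)

theorem isGlobalField_ulift_ratFunc (p : ℕ) (hp : p.Prime) :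
    letI : Fact p.Prime := ⟨hp⟩
    IsGlobalField (ULift.{w} (RatFunc (ZMod p))) := by
  letI : Fact p.Prime := ⟨hp⟩
  refine Or.inr ⟨p, hp, ULift.algebra, ?_⟩
  exact Module.Finite.of_surjective (Algebra.linearMap (RatFunc (ZMod p)) _)
    (fun x => ⟨x.down, by apply ULift.down_injective; simp [ULift.algebraMap_eq]⟩)

/-- Transfer of existential-fragment sentences between `A` and `ULift A`. -/
theorem realize_ulift_iff {A : Type u} [Field A] {φ : Language.ring.Sentence}
    (hφ : φ ∈ sentE Language.ring) :
    (letI := compatibleRingOfRing A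
     letI := compatibleRingOfRing (ULift.{w} A)
     (Sentence.Realize (ULift.{w} A) φ ↔ Sentence.Realize A φ)) := by
  letI := compatibleRingOfRing A
  letI := compatibleRingOfRing (ULift.{w} A)
  constructor
  · exact realize_sentE_of_embedding
      (embeddingOfRingHom (ULift.ringEquiv : ULift.{w} A ≃+* A).toRingHom
        (ULift.ringEquiv.injective)) hφ
  · exact realize_sentE_of_embedding
      (embeddingOfRingHom (ULift.ringEquiv : ULift.{w} A ≃+* A).symm.toRingHom
        (ULift.ringEquiv.symm.injective)) hφ

/-- If `φ` is an existential-fragment sentence holding in `ℚ`, it holds in every field of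
characteristic zero. -/
theorem realize_of_charZero {φ : Language.ring.Sentence} (hφ : φ ∈ sentE Language.ring)
    (hQ : (letI := compatibleRingOfRing ℚ
           Sentence.Realize ℚ φ))
    (K : Type w) [Field K] [CompatibleRing K] [CharZero K] : K ⊨ φ := by
  letI := compatibleRingOfRing ℚ
  exact realize_sentE_of_embedding
    (embeddingOfRingHom (Rat.castHom K) (Rat.castHom K).injective) hφ hQ

/-- If `φ` is an existential-fragment sentence holding in `𝔽_p(t)`, it holds in every
infinite field of characteristic `p`. -/
theorem realize_of_infinite_charP {p : ℕ} (hp : p.Prime) {φ : Language.ring.Sentence}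
    (hφ : φ ∈ sentE Language.ring)
    (hQ : (letI : Fact p.Prime := ⟨hp⟩
           letI := compatibleRingOfRing (RatFunc (ZMod p))
           Sentence.Realize (RatFunc (ZMod p)) φ))
    (K : Type w) [Field K] [CompatibleRing K] [Infinite K] [CharP K p] : K ⊨ φ := by
  haveI : Fact p.Prime := ⟨hp⟩
  letI := compatibleRingOfRing (RatFunc (ZMod p))
  obtain ⟨N, ⟨g⟩, hNcard⟩ :=
    exists_elementaryEmbedding_card_eq_of_ge Language.ring K (#K ⊔ Cardinal.aleph 1)
      (by
        rw [card_ring, Cardinal.lift_uzero, Cardinal.lift_ofNat]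
        refine le_sup_of_le_right (le_trans ?_ (Cardinal.aleph0_le_aleph 1))
        exact le_of_lt (Cardinal.nat_lt_aleph0 5))
      (Cardinal.lift_le.2 le_sup_left)
  haveI : (Theory.fieldOfChar p).Model N := (g.theory_model_iff _).1 inferInstance
  haveI : Theory.field.Model N := Theory.Model.mono this Set.subset_union_left
  letI := Field.fieldOfModelField N
  letI := Field.compatibleRingOfModelField N
  haveI : CharP N p := Field.charP_of_model_fieldOfChar p N
  letI : Algebra (ZMod p) N := ZMod.algebra _ _
  haveI : NoZeroSMulDivisors (ZMod p) N :=
    inferInstance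
  obtain ⟨x, hx⟩ : ∃ x : N, Transcendental (ZMod p) x := by
    by_contra h
    push_neg at h
    haveI : Algebra.IsAlgebraic (ZMod p) N := ⟨fun x => not_not.1 (h x)⟩
    have hle := Algebra.IsAlgebraic.lift_cardinalMk_le_max (ZMod p) N
    rw [Cardinal.lift_uzero] at hle
    have h1 : #N ≤ ℵ₀ :=
      hle.trans (sup_le (le_of_lt (Cardinal.lift_lt_aleph0.2 (Cardinal.lt_aleph0_of_finite _)))
        le_rfl)
    rw [hNcard] at h1
    exact absurd (le_sup_right.trans h1)
      (not_le.2 (by simpa using Cardinal.aleph0_lt_aleph_one))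
  have hinj : Function.Injective ((Polynomial.aeval x : Polynomial (ZMod p) →ₐ[ZMod p] N) :
      Polynomial (ZMod p) →+* N) := transcendental_iff_injective.1 hx
  let F : RatFunc (ZMod p) →+* N := IsFractionRing.lift (g := _) hinj
  have hN : Sentence.Realize N φ :=
    realize_sentE_of_embedding (embeddingOfRingHom F F.injective) hφ hQ
  exact (g.map_sentence φ).2 hN

/-- a sentence of the existential fragment holds in all global fields iff it
holds in all infinite fields (`G_∃ = (F^∞)_∃`); moreover for each prime `p`,
`G_{p,∃} = (F^∞)_{p,∃} = Th_∃(𝔽_p(t))`, and `G_{0,∃} = Th_∃(ℚ)`. -/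
theorem statement_17 :
    ({φ | φ ∈ sentE FirstOrder.Language.ring ∧
        ∀ (K : Type w) [Field K] [CompatibleRing K], IsGlobalField K → K ⊨ φ} =
      {φ | φ ∈ sentE FirstOrder.Language.ring ∧
        ∀ (K : Type w) [Field K] [CompatibleRing K], Infinite K → K ⊨ φ}) ∧
    (∀ p : ℕ, ∀ hp : p.Prime,
      {φ | φ ∈ sentE FirstOrder.Language.ring ∧
          ∀ (K : Type w) [Field K] [CompatibleRing K], IsGlobalField K → CharP K p → K ⊨ φ} =
        {φ | φ ∈ sentE FirstOrder.Language.ring ∧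
          ∀ (K : Type w) [Field K] [CompatibleRing K], Infinite K → CharP K p → K ⊨ φ} ∧
      {φ | φ ∈ sentE FirstOrder.Language.ring ∧
          ∀ (K : Type w) [Field K] [CompatibleRing K], IsGlobalField K → CharP K p → K ⊨ φ} =
        {φ | φ ∈ sentE FirstOrder.Language.ring ∧
          (letI : Fact p.Prime := ⟨hp⟩
           letI := compatibleRingOfRing (RatFunc (ZMod p))
           (RatFunc (ZMod p)) ⊨ φ)}) ∧
    ({φ | φ ∈ sentE FirstOrder.Language.ring ∧
        ∀ (K : Type w) [Field K] [CompatibleRing K], IsGlobalField K → CharP K 0 → K ⊨ φ} =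
      {φ | φ ∈ sentE FirstOrder.Language.ring ∧
        (letI := compatibleRingOfRing ℚ
         ℚ ⊨ φ)}) := by
  -- instances on `ULift` fields
  haveI factInst : ∀ (p : ℕ), p.Prime → True := fun _ _ => trivial
  -- from the global-field hypothesis, get the sentence in `ℚ`
  have getQ0 : ∀ {φ : Language.ring.Sentence},
      (∀ (K : Type w) [Field K] [CompatibleRing K], IsGlobalField K → CharP K 0 → K ⊨ φ) →
      φ ∈ sentE Language.ring →
      (letI := compatibleRingOfRing ℚ
       Sentence.Realize ℚ φ) := by
    intro φ h hφ
    letI := compatibleRingOfRing ℚ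
    letI := compatibleRingOfRing (ULift.{w} ℚ)
    haveI := charZero_ulift_rat.{w}
    haveI : CharP (ULift.{w} ℚ) 0 := CharP.ofCharZero _
    have := @h (ULift.{w} ℚ) _ _ isGlobalField_ulift_rat inferInstance
    exact (realize_ulift_iff (A := ℚ) hφ).1 this
  have getQp : ∀ (p : ℕ) (hp : p.Prime) {φ : Language.ring.Sentence},
      (∀ (K : Type w) [Field K] [CompatibleRing K], IsGlobalField K → CharP K p → K ⊨ φ) →
      φ ∈ sentE Language.ring →
      (letI : Fact p.Prime := ⟨hp⟩
       letI := compatibleRingOfRing (RatFunc (ZMod p))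
       Sentence.Realize (RatFunc (ZMod p)) φ) := by
    intro p hp φ h hφ
    haveI : Fact p.Prime := ⟨hp⟩
    letI := compatibleRingOfRing (RatFunc (ZMod p))
    letI := compatibleRingOfRing (ULift.{w} (RatFunc (ZMod p)))
    haveI : CharP (RatFunc (ZMod p)) p :=
      charP_of_injective_ringHom (f := (algebraMap (Polynomial (ZMod p))
          (RatFunc (ZMod p))).comp Polynomial.C)
        ((IsFractionRing.injective (Polynomial (ZMod p)) (RatFunc (ZMod p))).comp Polynomial.C_injective) p
    haveI : CharP (ULift.{w} (RatFunc (ZMod p))) p :=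
      charP_of_injective_ringHom
        (f := (ULift.ringEquiv (R := RatFunc (ZMod p))).symm.toRingHom)
        (ULift.ringEquiv (R := RatFunc (ZMod p))).symm.injective p
    have := @h (ULift.{w} (RatFunc (ZMod p))) _ _ (isGlobalField_ulift_ratFunc p hp)
      inferInstance
    exact (realize_ulift_iff (A := RatFunc (ZMod p)) hφ).1 this
  refine ⟨?_, fun p hp => ⟨?_, ?_⟩, ?_⟩
  · ext φ
    simp only [Set.mem_setOf_eq]
    constructor
    · rintro ⟨hφ, h⟩
      refine ⟨hφ, fun K _ _ hK => ?_⟩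
      haveI := hK
      haveI : CharP K (ringChar K) := ringChar.charP K
      rcases CharP.char_is_prime_or_zero K (ringChar K) with hpr | h0
      · exact realize_of_infinite_charP hpr hφ
          (getQp (ringChar K) hpr (fun K _ _ hg _ => h K hg) hφ) K
      · haveI : CharP K 0 := by rw [← h0]; infer_instance
        haveI : CharZero K := CharP.charP_to_charZero K
        exact realize_of_charZero hφ (getQ0 (fun K _ _ hg _ => h K hg) hφ) K
    · rintro ⟨hφ, h⟩
      refine ⟨hφ, fun K _ _ hg => ?_⟩
      haveI := infinite_of_isGlobalField hg
      exact h K inferInstance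
  · ext φ
    simp only [Set.mem_setOf_eq]
    constructor
    · rintro ⟨hφ, h⟩
      refine ⟨hφ, fun K _ _ hK hKp => ?_⟩
      haveI := hK; haveI := hKp
      exact realize_of_infinite_charP hp hφ (getQp p hp h hφ) K
    · rintro ⟨hφ, h⟩
      refine ⟨hφ, fun K _ _ hg hKp => ?_⟩
      haveI := infinite_of_isGlobalField hg
      exact h K inferInstance hKp
  · ext φ
    simp only [Set.mem_setOf_eq]
    constructor
    · rintro ⟨hφ, h⟩
      exact ⟨hφ, getQp p hp h hφ⟩
    · rintro ⟨hφ, hQ⟩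
      refine ⟨hφ, fun K _ _ hg hKp => ?_⟩
      haveI := hKp
      haveI := infinite_of_isGlobalField hg
      exact realize_of_infinite_charP hp hφ hQ K
  · ext φ
    simp only [Set.mem_setOf_eq]
    constructor
    · rintro ⟨hφ, h⟩
      exact ⟨hφ, getQ0 h hφ⟩
    · rintro ⟨hφ, hQ⟩
      refine ⟨hφ, fun K _ _ hg h0 => ?_⟩
      haveI := h0
      haveI : CharZero K := CharP.charP_to_charZero K
      exact realize_of_charZero hφ hQ K

end PaperStmt
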